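/- arXiv:2602.08140 — 2 statements merged into one kernel-verified Lean document; each statement's English description precedes it below -/
import Mathlib

section
/- Let A and B be vector spaces over a field k and let p : FreeLieAlgebra(A ⊕ B) → FreeLieAlgebra(A) be the Lie algebra homomorphism induced by the projection A ⊕ B → A. Then the kernel of p is the Lie ideal of FreeLieAlgebra(A ⊕ B) generated by the image of B. -/
universe u v w

/-- `(L, ι)` is the free Lie algebra on the `k`-module `V`: every linear map from `V` to a
Lie algebra extends uniquely to a morphism of Lie algebras out of `L`. -/
def IsFreeLieAlgebraOn (k : Type u) [CommRing k] (V : Type v) [AddCommGroup V] [Module k V]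
    (L : Type w) [LieRing L] [LieAlgebra k L] (ι : V →ₗ[k] L) : Prop :=
  ∀ (M : Type w) [LieRing M] [LieAlgebra k M] (f : V →ₗ[k] M),
    ∃! F : L →ₗ⁅k⁆ M, ∀ v : V, F (ι v) = f v

/-- The quotient map `L → L ⧸ I` as a morphism of Lie algebras. -/
def lieQuotMk {k : Type u} [CommRing k] {L : Type w} [LieRing L] [LieAlgebra k L]
    (I : LieIdeal k L) : L →ₗ⁅k⁆ L ⧸ I :=
  { (I : Submodule k L).mkQ with
    toFun := LieSubmodule.Quotient.mk
    map_lie' := fun {x y} => LieSubmodule.Quotient.mk_bracket I x y }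

/-- Let `p : FreeLie(A ⊕ B) → FreeLie(A)` be the morphism of free Lie algebras induced by
the projection `A ⊕ B → A`.  Then the kernel of `p` is the Lie ideal of `FreeLie(A ⊕ B)`
generated by the image of `B`. -/
theorem ker_freeLie_projection_eq_idealSpan_of_image
    {k : Type u} [Field k] {A B : Type v}
    [AddCommGroup A] [Module k A] [AddCommGroup B] [Module k B]
    {LAB LA : Type w} [LieRing LAB] [LieAlgebra k LAB] [LieRing LA] [LieAlgebra k LA]
    (ιAB : (A × B) →ₗ[k] LAB) (ιA : A →ₗ[k] LA)
    (hAB : IsFreeLieAlgebraOn k (A × B) LAB ιAB)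
    (hA : IsFreeLieAlgebraOn k A LA ιA)
    (p : LAB →ₗ⁅k⁆ LA) (hp : ∀ x : A × B, p (ιAB x) = ιA x.1) :
    p.ker = LieSubmodule.lieSpan k LAB (Set.range fun b : B => ιAB (0, b)) := by
  set I : LieIdeal k LAB := LieSubmodule.lieSpan k LAB (Set.range fun b : B => ιAB (0, b))
  have hle : I ≤ p.ker := by
    rw [LieSubmodule.lieSpan_le]
    rintro _ ⟨b, rfl⟩
    simp only [SetLike.mem_coe, LieHom.mem_ker, hp, map_zero]
  refine le_antisymm ?_ hle
  -- Build the section `s : LA → LAB ⧸ I` using freeness of `LA`.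
  let q : LAB →ₗ⁅k⁆ LAB ⧸ I := lieQuotMk I
  obtain ⟨s, hs, -⟩ := hA (LAB ⧸ I) (q.toLinearMap ∘ₗ ιAB ∘ₗ (LinearMap.inl k A B))
  -- `s ∘ p` and `q` agree on generators, hence are equal.
  have key : ∀ v : A × B, (s.comp p) (ιAB v) = q (ιAB v) := by
    rintro ⟨a, b⟩
    have h1 : q (ιAB (0, b)) = 0 := by
      have : ιAB (0, b) ∈ I := LieSubmodule.subset_lieSpan ⟨b, rfl⟩
      exact (LieSubmodule.Quotient.mk_eq_zero I).mpr this
    have h2 : ((a, b) : A × B) = (a, 0) + (0, b) := by simp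
    calc (s.comp p) (ιAB (a, b)) = s (ιA a) := by rw [LieHom.comp_apply, hp]
      _ = q (ιAB (a, 0)) := hs a
      _ = q (ιAB (a, 0)) + q (ιAB (0, b)) := by rw [h1, add_zero]
      _ = q (ιAB (a, b)) := by rw [← map_add q, ← ιAB.map_add, ← h2]
  obtain ⟨F, -, hFuniq⟩ := hAB (LAB ⧸ I) (q.toLinearMap ∘ₗ ιAB)
  have e1 : s.comp p = F := hFuniq _ (fun v => key v)
  have e2 : q = F := hFuniq _ (fun v => rfl)
  intro x hx
  have hpx : p x = 0 := hx
  have : q x = 0 := by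
    rw [e2, ← e1, LieHom.comp_apply, hpx, map_zero s]
  exact (LieSubmodule.Quotient.mk_eq_zero I).mp this
end

section
/- Let H be a ℚ-vector space with a linear action of a group G, and let λ : H × H → ℚ be a nonzero G-invariant bilinear form (λ(g·x, g·y) = λ(x, y) for all g ∈ G). Let L = ⊕_{r ∈ ℕ} H be a countable direct sum of copies of H with the diagonal G-action. Then the coinvariants [L ⊗_ℚ L]_G form an infinite-dimensional ℚ-vector space. -/
open TensorProduct

/-- Let `H` be a `ℚ`-vector space with a linear `G`-action `ρ` and `lam` a nonzero
`G`-invariant bilinear form on `H`.  Let `L = ⊕_{r ∈ ℕ} H` carry the diagonal `G`-action.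
Then the coinvariants of the diagonal `G`-action on `L ⊗_ℚ L` form an
infinite-dimensional `ℚ`-vector space. -/
theorem coinvariants_infinite_dimensional
    {G H : Type*} [Group G] [AddCommGroup H] [Module ℚ H]
    (ρ : Representation ℚ G H)
    (lam : H →ₗ[ℚ] H →ₗ[ℚ] ℚ) (hlam : lam ≠ 0)
    (hinv : ∀ (g : G) (x y : H), lam (ρ g x) (ρ g y) = lam x y) :
    ¬ Module.Finite ℚ (((ℕ →₀ H) ⊗[ℚ] (ℕ →₀ H)) ⧸
      Submodule.span ℚ {z : (ℕ →₀ H) ⊗[ℚ] (ℕ →₀ H) |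
        ∃ (g : G) (m : (ℕ →₀ H) ⊗[ℚ] (ℕ →₀ H)),
          z = m - TensorProduct.map (Finsupp.mapRange.linearMap (ρ g))
              (Finsupp.mapRange.linearMap (ρ g)) m}) := by
  intro hfin
  -- the big pairing map
  set Λ : ((ℕ →₀ H) ⊗[ℚ] (ℕ →₀ H)) →ₗ[ℚ] (ℕ × ℕ →₀ ℚ) :=
    (Finsupp.mapRange.linearMap (TensorProduct.lift lam)) ∘ₗ
      (finsuppTensorFinsupp ℚ ℚ H H ℕ ℕ).toLinearMap with hΛdef
  have hΛsingle : ∀ (r s : ℕ) (x y : H),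
      Λ (Finsupp.single r x ⊗ₜ Finsupp.single s y) = Finsupp.single (r, s) (lam x y) := by
    intro r s x y
    simp [hΛdef, finsuppTensorFinsupp_single]
  -- Λ is invariant under the diagonal action
  have hequiv : ∀ g : G, Λ ∘ₗ TensorProduct.map (Finsupp.mapRange.linearMap (ρ g))
      (Finsupp.mapRange.linearMap (ρ g)) = Λ := by
    intro g
    ext r x s y
    simp only [TensorProduct.AlgebraTensorModule.curry_apply, TensorProduct.curry_apply,
      LinearMap.coe_restrictScalars, LinearMap.coe_comp, Function.comp_apply,
      TensorProduct.map_tmul, Finsupp.mapRange.linearMap_apply, Finsupp.lsingle_apply,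
      Finsupp.mapRange_single]
    rw [hΛsingle, hΛsingle, hinv]
  -- Λ kills the relators
  have hker : Submodule.span ℚ {z : (ℕ →₀ H) ⊗[ℚ] (ℕ →₀ H) |
      ∃ (g : G) (m : (ℕ →₀ H) ⊗[ℚ] (ℕ →₀ H)),
        z = m - TensorProduct.map (Finsupp.mapRange.linearMap (ρ g))
            (Finsupp.mapRange.linearMap (ρ g)) m} ≤ LinearMap.ker Λ := by
    rw [Submodule.span_le]
    rintro z ⟨g, m, rfl⟩
    simp only [SetLike.mem_coe, LinearMap.mem_ker, map_sub, sub_eq_zero]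
    have := congrArg (fun f => f m) (hequiv g)
    simpa using this.symm
  -- induced map on the quotient
  set Λ' := Submodule.liftQ _ Λ hker
  -- Λ is surjective
  have hsurj : Function.Surjective Λ := by
    obtain ⟨x, hx⟩ : ∃ x, lam x ≠ 0 := by
      by_contra h
      push_neg at h
      exact hlam (LinearMap.ext h)
    obtain ⟨y, hy⟩ : ∃ y, lam x y ≠ 0 := by
      by_contra h
      push_neg at h
      exact hx (LinearMap.ext h)
    intro c
    induction c using Finsupp.induction_linear with
    | zero => exact ⟨0, map_zero _⟩
    | add f g hf hg =>
      obtain ⟨a, ha⟩ := hf; obtain ⟨b, hb⟩ := hg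
      exact ⟨a + b, by rw [map_add, ha, hb]⟩
    | single p q =>
      obtain ⟨r, s⟩ := p
      refine ⟨(q * (lam x y)⁻¹) • (Finsupp.single r x ⊗ₜ Finsupp.single s y), ?_⟩
      rw [map_smul, hΛsingle, Finsupp.smul_single, smul_eq_mul, mul_assoc,
        inv_mul_cancel₀ hy, mul_one]
  have hsurj' : Function.Surjective Λ' := by
    intro c
    obtain ⟨m, hm⟩ := hsurj c
    exact ⟨Submodule.Quotient.mk m, by simpa [Λ'] using hm⟩
  have : Module.Finite ℚ (ℕ × ℕ →₀ ℚ) := Module.Finite.of_surjective Λ' hsurj'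
  have : Fintype (ℕ × ℕ) :=
    FiniteDimensional.fintypeBasisIndex (Finsupp.basisSingleOne : Module.Basis (ℕ × ℕ) ℚ _)
  exact (inferInstance : Infinite (ℕ × ℕ)).not_finite (Finite.of_fintype _)
end
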